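/- In the infinitely-armed bandit environment with arms ζ_i having success probabilities δ_i ∈ [0,1], i ∈ ℕ, the optimal asymptotic average value equals δ := sup_i δ_i: (a) for every policy p, limsup_n (1/n)Σ_{i=1}^n r_i ≤ δ almost surely; (b) there exists a policy p (knowing all δ_i) with lim_n (1/n)Σ_{i=1}^n r_i = δ almost surely. -/

import Mathlib

open MeasureTheory ProbabilityTheory Filter Finset

/-- Actions in the infinitely-armed bandit: pull current arm, move one arm up, move down. -/
inductive Act | g | u | d

/-- The interaction of a deterministic policy `p` with the bandit: the state after `t` steps
is (current arm index, pull counts of each arm, history of (action, reward) pairs).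
`U i s` is the outcome of the s-th pull of arm i. -/
def run (p : List (Act × Bool) → Act) (U : ℕ → ℕ → Bool) :
    ℕ → ℕ × (ℕ → ℕ) × List (Act × Bool)
  | 0 => (0, fun _ => 0, [])
  | t + 1 =>
    let s := run p U t
    match p s.2.2 with
    | Act.g => (s.1, Function.update s.2.1 s.1 (s.2.1 s.1 + 1),
        s.2.2 ++ [(Act.g, U s.1 (s.2.1 s.1))])
    | Act.u => (s.1 + 1, s.2.1, s.2.2 ++ [(Act.u, false)])
    | Act.d => (0, s.2.1, s.2.2 ++ [(Act.d, false)])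

/-- The (Boolean) reward received by policy `p` at step `t`. -/
def rewB (p : List (Act × Bool) → Act) (U : ℕ → ℕ → Bool) (t : ℕ) : Bool :=
  match p (run p U t).2.2 with
  | Act.g => U (run p U t).1 ((run p U t).2.1 (run p U t).1)
  | _ => false


set_option linter.unusedSectionVars false
set_option linter.unusedVariables false
set_option maxHeartbeats 1000000

deriving instance DecidableEq for Act

namespace BanditAux

/-- one step of the reconstruction of (arm, counts, pull records) from a history -/
def rstep : ((ℕ × (ℕ → ℕ)) × List ((ℕ × ℕ) × Bool)) → (Act × Bool) →
    ((ℕ × (ℕ → ℕ)) × List ((ℕ × ℕ) × Bool))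
  | s, (Act.g, r) => ((s.1.1, Function.update s.1.2 s.1.1 (s.1.2 s.1.1 + 1)),
      s.2 ++ [((s.1.1, s.1.2 s.1.1), r)])
  | s, (Act.u, _) => ((s.1.1 + 1, s.1.2), s.2)
  | s, (Act.d, _) => ((0, s.1.2), s.2)

/-- reconstruct (arm, counts, pull records) from a history -/
def replay (h : List (Act × Bool)) : (ℕ × (ℕ → ℕ)) × List ((ℕ × ℕ) × Bool) :=
  h.foldl rstep ((0, fun _ => 0), [])

lemma replay_append (h : List (Act × Bool)) (x : Act × Bool) :
    replay (h ++ [x]) = rstep (replay h) x := by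
  simp [replay, List.foldl_append]

variable (p : List (Act × Bool) → Act)

lemma run_succ (V : ℕ → ℕ → Bool) (n : ℕ) :
    run p V (n + 1) =
      match p (run p V n).2.2 with
      | Act.g => ((run p V n).1,
          Function.update (run p V n).2.1 (run p V n).1 ((run p V n).2.1 (run p V n).1 + 1),
          (run p V n).2.2 ++ [(Act.g, V (run p V n).1 ((run p V n).2.1 (run p V n).1))])
      | Act.u => ((run p V n).1 + 1, (run p V n).2.1, (run p V n).2.2 ++ [(Act.u, false)])
      | Act.d => (0, (run p V n).2.1, (run p V n).2.2 ++ [(Act.d, false)]) := by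
  rw [run]

lemma run_length (V : ℕ → ℕ → Bool) : ∀ n, (run p V n).2.2.length = n := by
  intro n
  induction n with
  | zero => rfl
  | succ n ih =>
    rw [run_succ]
    rcases h : p (run p V n).2.2 <;> simp [h, ih]

/-- master invariant: replay of the history reconstructs the run state, records are
consistent with V, record pairs are below the current counts, and distinct. -/
lemma replay_run (V : ℕ → ℕ → Bool) : ∀ n,
    (replay ((run p V n).2.2)).1.1 = (run p V n).1 ∧
    (replay ((run p V n).2.2)).1.2 = (run p V n).2.1 ∧
    (∀ e ∈ (replay ((run p V n).2.2)).2, V e.1.1 e.1.2 = e.2) ∧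
    (∀ e ∈ (replay ((run p V n).2.2)).2, e.1.2 < (run p V n).2.1 e.1.1) ∧
    ((replay ((run p V n).2.2)).2.map Prod.fst).Nodup := by
  intro n
  induction n with
  | zero =>
    have h0 : (run p V 0).2.2 = [] := rfl
    refine ⟨rfl, rfl, ?_, ?_, ?_⟩ <;> simp [h0, replay]
  | succ n ih =>
    obtain ⟨h1, h2, h3, h4, h5⟩ := ih
    rw [run_succ]
    rcases hact : p (run p V n).2.2 with _ | _ | _
    · -- g
      simp only [hact, replay_append, rstep, h1, h2]
      refine ⟨?_, ?_, ?_, ?_, ?_⟩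
      · simp [rstep]
      · simp [rstep]
      · intro e he
        rcases List.mem_append.1 he with he' | he'
        · exact h3 e he'
        · simp at he'
          subst he'
          simp [h1, h2]
      · intro e he
        rcases List.mem_append.1 he with he' | he'
        · have := h4 e he'
          by_cases harm : e.1.1 = (run p V n).1
          · rw [harm] at this ⊢
            rw [Function.update_self]; omega
          · rw [Function.update_of_ne harm]; exact this
        · simp at he'
          subst he'
          simp [Function.update_self]
      · rw [List.map_append, List.nodup_append']
        refine ⟨h5, by simp, ?_⟩
        simp only [List.map_cons, List.map_nil, List.disjoint_singleton]
        intro hmem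
        simp only [List.mem_map] at hmem
        obtain ⟨e, he, hee⟩ := hmem
        have := h4 e he
        rw [hee] at this
        simp at this
    · simp only [hact, replay_append, rstep, h1, h2]
      exact ⟨trivial, trivial, h3, h4, h5⟩
    · simp only [hact, replay_append, rstep, h1, h2]
      exact ⟨trivial, trivial, h3, h4, h5⟩


lemma pulls_succ_g {V : ℕ → ℕ → Bool} {n : ℕ} (hact : p ((run p V n).2.2) = Act.g) :
    (replay ((run p V (n+1)).2.2)).2 = (replay ((run p V n).2.2)).2 ++
      [(((run p V n).1, (run p V n).2.1 (run p V n).1),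
        V (run p V n).1 ((run p V n).2.1 (run p V n).1))] := by
  obtain ⟨h1, h2, -, -, -⟩ := replay_run p V n
  rw [run_succ, hact]
  simp only [replay_append, rstep, h1, h2]

lemma pulls_succ_ng {V : ℕ → ℕ → Bool} {n : ℕ} (hact : p ((run p V n).2.2) ≠ Act.g) :
    (replay ((run p V (n+1)).2.2)).2 = (replay ((run p V n).2.2)).2 := by
  rw [run_succ]
  rcases h : p ((run p V n).2.2) with _ | _ | _
  · exact absurd h hact
  · simp only [replay_append, rstep]
  · simp only [replay_append, rstep]

lemma pulls_mono {V : ℕ → ℕ → Bool} {n : ℕ} :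
    ∀ e ∈ (replay ((run p V n).2.2)).2, e ∈ (replay ((run p V (n+1)).2.2)).2 := by
  intro e he
  by_cases hact : p ((run p V n).2.2) = Act.g
  · rw [pulls_succ_g p hact]; exact List.mem_append_left _ he
  · rw [pulls_succ_ng p hact]; exact he

/-- if V' agrees with V on all recorded pulls, the run is the same -/
lemma run_congr (V V' : ℕ → ℕ → Bool) : ∀ n : ℕ,
    (∀ e ∈ (replay ((run p V n).2.2)).2, V' e.1.1 e.1.2 = e.2) →
    run p V' n = run p V n := by
  intro n
  induction n with
  | zero => intro _; rfl
  | succ n ih =>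
    intro h
    have hn : run p V' n = run p V n := ih (fun e he => h e (pulls_mono p e he))
    by_cases hact : p ((run p V n).2.2) = Act.g
    · have hmem : (((run p V n).1, (run p V n).2.1 (run p V n).1),
          V (run p V n).1 ((run p V n).2.1 (run p V n).1))
          ∈ (replay ((run p V (n+1)).2.2)).2 := by
        rw [pulls_succ_g p hact]; exact List.mem_append_right _ (by simp)
      have hV : V' (run p V n).1 ((run p V n).2.1 (run p V n).1)
          = V (run p V n).1 ((run p V n).2.1 (run p V n).1) := h _ hmem
      rw [run_succ, run_succ, hn, hact]
      simp only [hV]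
    · rw [run_succ, run_succ, hn]
      rcases hact' : p ((run p V n).2.2) with _ | _ | _
      · exact absurd hact' hact
      · rfl
      · rfl

/-- equal histories force equal run states -/
lemma run_determined (V V' : ℕ → ℕ → Bool) (n : ℕ)
    (h : (run p V' n).2.2 = (run p V n).2.2) : run p V' n = run p V n := by
  obtain ⟨h1, h2, -, -, -⟩ := replay_run p V n
  obtain ⟨h1', h2', -, -, -⟩ := replay_run p V' n
  have e1 : (run p V' n).1 = (run p V n).1 := by rw [← h1, ← h1', h]
  have e2 : (run p V' n).2.1 = (run p V n).2.1 := by rw [← h2, ← h2', h]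
  exact Prod.ext e1 (Prod.ext e2 h)

lemma hist_succ (V : ℕ → ℕ → Bool) (n : ℕ) :
    (run p V (n+1)).2.2 = (run p V n).2.2 ++ [(p ((run p V n).2.2), rewB p V n)] := by
  rw [run_succ]
  rcases hact : p ((run p V n).2.2) with _ | _ | _ <;> simp [rewB, hact]

lemma hist_succ_inj (V V' : ℕ → ℕ → Bool) (n : ℕ)
    (h : (run p V' (n+1)).2.2 = (run p V (n+1)).2.2) :
    (run p V' n).2.2 = (run p V n).2.2 ∧
      (p ((run p V' n).2.2), rewB p V' n) = (p ((run p V n).2.2), rewB p V n) := by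
  rw [hist_succ, hist_succ] at h
  have := List.append_inj' h (by simp)
  exact ⟨this.1, by simpa using this.2⟩

/-- the finite set of possible histories at time n -/
def Hs : ℕ → Finset (List (Act × Bool))
  | 0 => {([] : List (Act × Bool))}
  | n+1 => (Hs n).biUnion fun h =>
      if p h = Act.g then {h ++ [(Act.g, true)], h ++ [(Act.g, false)]}
      else {h ++ [(p h, false)]}

lemma mem_Hs (V : ℕ → ℕ → Bool) : ∀ n, (run p V n).2.2 ∈ Hs p n := by
  intro n
  induction n with
  | zero => simp [Hs]; rfl
  | succ n ih =>
    rw [Hs]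
    apply Finset.mem_biUnion.2
    refine ⟨(run p V n).2.2, ih, ?_⟩
    rw [hist_succ]
    by_cases hact : p ((run p V n).2.2) = Act.g
    · rw [if_pos hact, hact]
      rcases hb : rewB p V n
      · exact Finset.mem_insert.2 (Or.inr (by simp))
      · exact Finset.mem_insert.2 (Or.inl (by simp))
    · rw [if_neg hact]
      have : rewB p V n = false := by
        unfold rewB
        rcases hact' : p ((run p V n).2.2) with _ | _ | _
        · exact absurd hact' hact
        · simp [hact']
        · simp [hact']
      rw [this]
      simp

lemma Hs_len : ∀ n, ∀ h ∈ Hs p n, h.length = n := by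
  intro n
  induction n with
  | zero => intro h hh; simp [Hs] at hh; simp [hh]
  | succ n ih =>
    intro h hh
    rw [Hs] at hh
    obtain ⟨h', hh', hmem⟩ := Finset.mem_biUnion.1 hh
    by_cases hact : p h' = Act.g
    · rw [if_pos hact] at hmem
      rcases Finset.mem_insert.1 hmem with h1 | h1
      · simp [h1, ih h' hh']
      · simp at h1; simp [h1, ih h' hh']
    · rw [if_neg hact] at hmem
      simp at hmem
      simp [hmem, ih h' hh']

/-- number of successes recorded in a history -/
def kk (h : List (Act × Bool)) : ℕ := (h.filter (fun e => e.2)).length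

lemma sum_rewB (V : ℕ → ℕ → Bool) : ∀ n : ℕ,
    (∑ t ∈ Finset.range n, (if rewB p V t then (1:ℝ) else 0))
      = kk ((run p V n).2.2) := by
  intro n
  induction n with
  | zero =>
    have h0 : (run p V 0).2.2 = [] := rfl
    simp [kk, h0]
  | succ n ih =>
    rw [Finset.sum_range_succ, ih, hist_succ]
    unfold kk
    rw [List.filter_append, List.length_append]
    rcases hb : rewB p V n <;> simp [hb]


section Schedule

variable (arm : ℕ → ℕ)

/-- phase start times -/
def TT : ℕ → ℕ
  | 0 => 0
  | j+1 => TT j + (1 + arm j + (j+1) * (TT j + arm (j+1) + arm j + 2))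

/-- number of pulls in phase j -/
def NN (j : ℕ) : ℕ := (j+1) * (TT arm j + arm (j+1) + arm j + 2)

/-- length of phase j -/
def BB (j : ℕ) : ℕ := 1 + arm j + NN arm j

lemma TT_succ (j : ℕ) : TT arm (j+1) = TT arm j + BB arm j := rfl

lemma BB_pos (j : ℕ) : 1 ≤ BB arm j := by unfold BB; omega

lemma NN_pos (j : ℕ) : 2 ≤ NN arm j := by unfold NN; nlinarith [Nat.zero_le (TT arm j), Nat.zero_le (arm (j+1)), Nat.zero_le (arm j)]

lemma le_TT : ∀ j, j ≤ TT arm j := by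
  intro j
  induction j with
  | zero => simp [TT]
  | succ j ih => rw [TT_succ]; have := BB_pos arm j; omega

lemma TT_mono : Monotone (TT arm) := by
  apply monotone_nat_of_le_succ
  intro j
  rw [TT_succ]
  omega

/-- the phase of time t -/
def ph (t : ℕ) : ℕ := Nat.findGreatest (fun j => TT arm j ≤ t) t

lemma ph_spec (t : ℕ) : TT arm (ph arm t) ≤ t := by
  exact Nat.findGreatest_spec (m := 0) (P := fun j => TT arm j ≤ t) (Nat.zero_le t)
    (by simp [TT])

lemma le_ph {j t : ℕ} (h : TT arm j ≤ t) : j ≤ ph arm t :=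
  Nat.le_findGreatest (le_trans (le_TT arm j) h) h

lemma ph_lt (t : ℕ) : t < TT arm (ph arm t + 1) := by
  by_contra hcon
  push_neg at hcon
  have := le_ph arm hcon
  omega

lemma ph_mono : Monotone (ph arm) := by
  intro t t' htt
  exact le_ph arm (le_trans (ph_spec arm t) htt)

lemma ph_eq {j o : ℕ} (ho : o < BB arm j) : ph arm (TT arm j + o) = j := by
  have h1 : j ≤ ph arm (TT arm j + o) := le_ph arm (by omega)
  have h2 := ph_lt arm (TT arm j + o)
  have hsp := ph_spec arm (TT arm j + o)
  by_contra hcon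
  have hj1 : j + 1 ≤ ph arm (TT arm j + o) := by omega
  have := TT_mono arm hj1
  rw [TT_succ] at this
  omega

/-- the deterministic schedule: at the start of each phase go down, then walk up to
arm (arm j), then pull for the rest of the phase -/
def sched (t : ℕ) : Act :=
  if t - TT arm (ph arm t) = 0 then Act.d
  else if t - TT arm (ph arm t) ≤ arm (ph arm t) then Act.u
  else Act.g

lemma sched_eq {j o : ℕ} (ho : o < BB arm j) :
    sched arm (TT arm j + o) = if o = 0 then Act.d else if o ≤ arm j then Act.u
      else Act.g := by
  unfold sched
  rw [ph_eq arm ho]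
  simp [Nat.add_sub_cancel_left]

/-- the deterministic evolution of (arm index, pull counts) under the schedule -/
def drun : ℕ → ℕ × (ℕ → ℕ)
  | 0 => (0, fun _ => 0)
  | t+1 =>
    let s := drun t
    match sched arm t with
    | Act.g => (s.1, Function.update s.2 s.1 (s.2 s.1 + 1))
    | Act.u => (s.1 + 1, s.2)
    | Act.d => (0, s.2)

/-- the open-loop policy implementing the schedule -/
def pol : List (Act × Bool) → Act := fun h => sched arm h.length

lemma run_drun (V : ℕ → ℕ → Bool) : ∀ t,
    (run (pol arm) V t).1 = (drun arm t).1 ∧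
    (run (pol arm) V t).2.1 = (drun arm t).2 := by
  intro t
  induction t with
  | zero => exact ⟨rfl, rfl⟩
  | succ t ih =>
    have hact : pol arm ((run (pol arm) V t).2.2) = sched arm t := by
      unfold pol
      rw [run_length]
    rw [run_succ, hact]
    rcases hs : sched arm t with _ | _ | _ <;>
      simp only [drun, hs, ih.1, ih.2] <;> exact ⟨trivial, trivial⟩

lemma rewB_pol (V : ℕ → ℕ → Bool) (t : ℕ) :
    rewB (pol arm) V t = if sched arm t = Act.g
      then V (drun arm t).1 ((drun arm t).2 (drun arm t).1) else false := by
  have hact : pol arm ((run (pol arm) V t).2.2) = sched arm t := by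
    unfold pol
    rw [run_length]
  unfold rewB
  rw [hact, (run_drun arm V t).1, (run_drun arm V t).2]
  rcases hs : sched arm t with _ | _ | _ <;> simp [hs]

lemma dcnt_mono (i : ℕ) : Monotone (fun t => (drun arm t).2 i) := by
  apply monotone_nat_of_le_succ
  intro t
  simp only [drun]
  rcases hs : sched arm t with _ | _ | _ <;> simp only
  · by_cases hi : i = (drun arm t).1
    · subst hi; rw [Function.update_self]; omega
    · rw [Function.update_of_ne hi]
  · exact le_refl _
  · exact le_refl _

lemma dcnt_succ_g {t : ℕ} (hg : sched arm t = Act.g) :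
    (drun arm (t+1)).2 (drun arm t).1 = (drun arm t).2 (drun arm t).1 + 1 := by
  simp only [drun, hg]
  rw [Function.update_self]

/-- pull pairs at distinct g-times are distinct -/
lemma pair_inj {t t' : ℕ} (h : t < t') (hg : sched arm t = Act.g)
    (hg' : sched arm t' = Act.g) :
    ((drun arm t).1, (drun arm t).2 (drun arm t).1)
      ≠ ((drun arm t').1, (drun arm t').2 (drun arm t').1) := by
  intro hcon
  obtain ⟨h1, h2⟩ := Prod.mk.inj hcon
  have h3 := dcnt_succ_g arm hg
  have h4 : (drun arm (t+1)).2 (drun arm t).1 ≤ (drun arm t').2 (drun arm t).1 :=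
    dcnt_mono arm (drun arm t).1 h
  rw [h1] at h2 h3 h4
  omega


lemma isG_exists (n : ℕ) : ∃ t, n ≤ t ∧ sched arm t = Act.g := by
  refine ⟨TT arm n + (arm n + 1), ?_, ?_⟩
  · have := le_TT arm n; omega
  · have hBB : arm n + 1 < BB arm n := by
      have := NN_pos arm n; unfold BB; omega
    rw [sched_eq arm hBB]
    simp

lemma isG_infinite : {t | sched arm t = Act.g}.Infinite := by
  rw [Set.infinite_coe_iff.symm]
  by_contra hfin
  rw [not_infinite_iff_finite] at hfin
  have hbdd : BddAbove {t | sched arm t = Act.g} := (Set.toFinite _).bddAbove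
  obtain ⟨b, hb⟩ := hbdd
  obtain ⟨t, ht, hg⟩ := isG_exists arm (b + 1)
  have := hb hg
  omega

/-- the time of the m-th pull -/
noncomputable def gt (m : ℕ) : ℕ := Nat.nth (fun t => sched arm t = Act.g) m

/-- the number of pulls before time n -/
def GG (n : ℕ) : ℕ := Nat.count (fun t => sched arm t = Act.g) n

lemma gt_g (m : ℕ) : sched arm (gt arm m) = Act.g :=
  Nat.nth_mem_of_infinite (isG_infinite arm) m

lemma gt_strictMono : StrictMono (gt arm) :=
  Nat.nth_strictMono (isG_infinite arm)

lemma le_gt (m : ℕ) : m ≤ gt arm m := (gt_strictMono arm).le_apply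

lemma gt_GG {t : ℕ} (h : sched arm t = Act.g) : gt arm (GG arm t) = t :=
  Nat.nth_count h

lemma GG_succ (n : ℕ) :
    GG arm (n+1) = GG arm n + if sched arm n = Act.g then 1 else 0 :=
  Nat.count_succ _ _

/-- the pair pulled at the m-th pull -/
noncomputable def pr (m : ℕ) : ℕ × ℕ :=
  ((drun arm (gt arm m)).1, (drun arm (gt arm m)).2 (drun arm (gt arm m)).1)

lemma pr_inj : Function.Injective (pr arm) := by
  intro m m' hmm
  by_contra hne
  rcases Nat.lt_or_ge m m' with h | h
  · exact pair_inj arm (gt_strictMono arm h) (gt_g arm m) (gt_g arm m') hmm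
  · have h' : m' < m := by omega
    exact pair_inj arm (gt_strictMono arm h') (gt_g arm m') (gt_g arm m) hmm.symm

lemma sum_reindex (V : ℕ → ℕ → Bool) : ∀ n : ℕ,
    (∑ t ∈ Finset.range n, (if rewB (pol arm) V t then (1:ℝ) else 0))
      = ∑ m ∈ Finset.range (GG arm n),
          (if V (pr arm m).1 (pr arm m).2 then (1:ℝ) else 0) := by
  intro n
  induction n with
  | zero => simp [GG]
  | succ n ih =>
    rw [Finset.sum_range_succ, ih, GG_succ, rewB_pol]
    by_cases hg : sched arm n = Act.g
    · rw [if_pos hg, if_pos hg, Finset.sum_range_succ]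
      have hpr : pr arm (GG arm n)
          = ((drun arm n).1, (drun arm n).2 (drun arm n).1) := by
        unfold pr
        rw [gt_GG arm hg]
      rw [hpr]
    · rw [if_neg hg, if_neg hg]
      simp

lemma drun_arm_min (j : ℕ) : ∀ o, 1 ≤ o → o < BB arm j →
    (drun arm (TT arm j + o)).1 = min (o-1) (arm j) := by
  intro o
  induction o with
  | zero => omega
  | succ o ih =>
    intro _ hBB
    rcases Nat.eq_zero_or_pos o with ho | ho
    · subst ho
      have hsch : sched arm (TT arm j) = Act.d := by
        have h0 : (0:ℕ) < BB arm j := BB_pos arm j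
        have := sched_eq arm (j := j) (o := 0) h0
        simpa using this
      show (drun arm ((TT arm j + 0) + 1)).1 = _
      simp only [drun, Nat.add_zero, hsch]
      simp
    · have ihv := ih ho (by omega)
      have hsch := sched_eq arm (j := j) (o := o) (by omega)
      rw [if_neg (by omega)] at hsch
      have heq : TT arm j + (o + 1) = (TT arm j + o) + 1 := by omega
      rw [heq]
      by_cases hu : o ≤ arm j
      · rw [if_pos hu] at hsch
        simp only [drun, hsch, ihv]
        omega
      · rw [if_neg hu] at hsch
        simp only [drun, hsch, ihv]
        omega

lemma g_arm {t : ℕ} (hg : sched arm t = Act.g) :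
    (drun arm t).1 = arm (ph arm t) := by
  set j := ph arm t with hj
  have hsp : TT arm j ≤ t := ph_spec arm t
  have hlt : t < TT arm j + BB arm j := by
    have := ph_lt arm t
    rw [TT_succ] at this
    exact this
  set o := t - TT arm j with ho
  have ht : t = TT arm j + o := by omega
  have hBB : o < BB arm j := by omega
  have hsch := sched_eq arm (j := j) (o := o) hBB
  rw [← ht] at hsch
  rw [hsch] at hg
  have h1 : ¬ o = 0 := by
    intro h
    rw [if_pos h] at hg
    exact Act.noConfusion hg
  have h2 : ¬ o ≤ arm j := by
    intro h
    rw [if_neg h1, if_pos h] at hg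
    exact Act.noConfusion hg
  rw [ht, drun_arm_min arm j o (by omega) hBB]
  omega

/-- total travel cost of the first k phases -/
def CC (k : ℕ) : ℕ := ∑ l ∈ Finset.range k, (1 + arm l)

lemma GG_add_nonG (n : ℕ) : GG arm n + #{t ∈ Finset.range n | ¬ sched arm t = Act.g} = n := by
  rw [GG, Nat.count_eq_card_filter_range]
  rw [Finset.card_filter_add_card_filter_not]
  exact Finset.card_range n

lemma nonG_le (n : ℕ) : n - GG arm n ≤ CC arm (ph arm n + 1) := by
  have hsplit := GG_add_nonG arm n
  have hsub : {t ∈ Finset.range n | ¬ sched arm t = Act.g} ⊆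
      (Finset.range (ph arm n + 1)).biUnion
        (fun l => Finset.Icc (TT arm l) (TT arm l + arm l)) := by
    intro s hs
    rw [Finset.mem_filter, Finset.mem_range] at hs
    obtain ⟨hsn, hns⟩ := hs
    set j := ph arm s with hj
    have hsp : TT arm j ≤ s := ph_spec arm s
    have hlt : s < TT arm j + BB arm j := by
      have := ph_lt arm s
      rw [TT_succ] at this
      exact this
    set o := s - TT arm j with ho
    have hseq : s = TT arm j + o := by omega
    have hsch := sched_eq arm (j := j) (o := o) (by omega)
    rw [← hseq] at hsch
    have holt : o ≤ arm j := by
      rw [hsch] at hns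
      split_ifs at hns with h1 h2
      · omega
      · exact h2
      · simp at hns
    apply Finset.mem_biUnion.2
    refine ⟨j, ?_, ?_⟩
    · rw [Finset.mem_range]
      have : j ≤ ph arm n := ph_mono arm (by omega)
      omega
    · rw [Finset.mem_Icc]
      omega
  have hcard := Finset.card_le_card hsub
  have hbiu := Finset.card_biUnion_le (s := Finset.range (ph arm n + 1))
    (t := fun l => Finset.Icc (TT arm l) (TT arm l + arm l))
  have hIcc : ∀ l, (Finset.Icc (TT arm l) (TT arm l + arm l)).card = 1 + arm l := by
    intro l
    rw [Nat.card_Icc]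
    omega
  have : ∑ l ∈ Finset.range (ph arm n + 1), (Finset.Icc (TT arm l) (TT arm l + arm l)).card
      = CC arm (ph arm n + 1) :=
    Finset.sum_congr rfl fun l _ => hIcc l
  omega

lemma CC_le_TT : ∀ k, CC arm k ≤ TT arm k := by
  intro k
  induction k with
  | zero => simp [CC, TT]
  | succ k ih =>
    rw [TT_succ]
    have : CC arm (k+1) = CC arm k + (1 + arm k) := Finset.sum_range_succ _ _
    unfold BB
    omega

lemma main_growth (t : ℕ) (h1 : 1 ≤ ph arm t) :
    (t - GG arm t) * (ph arm t) ≤ t := by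
  obtain ⟨j', hphj⟩ : ∃ j', ph arm t = j' + 1 := ⟨ph arm t - 1, by omega⟩
  rw [hphj]
  have hCC : CC arm (j' + 2) = CC arm j' + (1 + arm j') + (1 + arm (j'+1)) := by
    rw [CC, Finset.sum_range_succ, Finset.sum_range_succ]; rfl
  have hCCle : CC arm j' ≤ TT arm j' := CC_le_TT arm j'
  have hNN : NN arm j' = (j'+1) * (TT arm j' + arm (j'+1) + arm j' + 2) := rfl
  have hTT : TT arm (j'+1) = TT arm j' + 1 + arm j' + NN arm j' := by
    rw [TT_succ]; unfold BB; omega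
  have hle : t - GG arm t ≤ CC arm (j' + 2) := by
    have := nonG_le arm t
    rw [hphj] at this
    exact this
  have hR : CC arm (j' + 2) ≤ TT arm j' + arm (j'+1) + arm j' + 2 := by omega
  have hsp : TT arm (j'+1) ≤ t := by
    have := ph_spec arm t
    rw [hphj] at this
    exact this
  calc (t - GG arm t) * (j' + 1) ≤ (TT arm j' + arm (j'+1) + arm j' + 2) * (j' + 1) :=
      Nat.mul_le_mul_right _ (by omega)
    _ = NN arm j' := by rw [hNN]; ring
    _ ≤ t := by omega


lemma GG_le (n : ℕ) : GG arm n ≤ n := by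
  have := GG_add_nonG arm n
  omega

lemma ph_tendsto : Filter.Tendsto (ph arm) Filter.atTop Filter.atTop :=
  Filter.tendsto_atTop.2 fun j =>
    (Filter.eventually_ge_atTop (TT arm j)).mono fun n hn => le_ph arm hn

lemma GG_tendsto : Filter.Tendsto (GG arm) Filter.atTop Filter.atTop := by
  apply Filter.tendsto_atTop.2
  intro b
  filter_upwards [Filter.eventually_ge_atTop (TT arm 2),
    Filter.eventually_ge_atTop (2*b)] with n h2 hb
  have hph : 2 ≤ ph arm n := le_ph arm h2
  have hg := main_growth arm n (by omega)
  have hg2 : (n - GG arm n) * 2 ≤ (n - GG arm n) * ph arm n :=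
    Nat.mul_le_mul_left _ (by omega)
  have hle := GG_le arm n
  omega

lemma GG_div_tendsto :
    Filter.Tendsto (fun n => (GG arm n : ℝ) / n) Filter.atTop (nhds 1) := by
  rw [Metric.tendsto_atTop]
  intro ε hε
  obtain ⟨k, hk⟩ := exists_nat_one_div_lt (K := ℝ) hε
  refine ⟨max (TT arm (k+1)) 1, fun n hn => ?_⟩
  have hn1 : 1 ≤ n := le_trans (le_max_right _ _) hn
  have hnT : TT arm (k+1) ≤ n := le_trans (le_max_left _ _) hn
  have hph : k + 1 ≤ ph arm n := le_ph arm hnT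
  have hg := main_growth arm n (by omega)
  have hgk : (n - GG arm n) * (k+1) ≤ n :=
    le_trans (Nat.mul_le_mul_left _ (by omega)) hg
  have hle := GG_le arm n
  have hnpos : (0:ℝ) < n := by exact_mod_cast hn1
  have hkpos : (0:ℝ) < (k:ℝ) + 1 := by positivity
  have hcast : ((n:ℝ) - GG arm n) * ((k:ℝ)+1) ≤ n := by
    have : ((n - GG arm n : ℕ) : ℝ) * (((k+1 : ℕ)) : ℝ) ≤ ((n:ℕ) : ℝ) := by
      exact_mod_cast hgk
    rw [Nat.cast_sub hle] at this
    push_cast at this ⊢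
    linarith
  have hGle : (GG arm n : ℝ) ≤ n := by exact_mod_cast hle
  rw [Real.dist_eq]
  have heq : (GG arm n : ℝ)/n - 1 = -(((n:ℝ) - GG arm n)/n) := by
    field_simp
    ring
  rw [heq, abs_neg, abs_of_nonneg (div_nonneg (by linarith) hnpos.le)]
  have hfrac : ((n:ℝ) - GG arm n)/n ≤ 1/((k:ℝ)+1) := by
    rw [div_le_div_iff₀ hnpos hkpos]
    linarith
  linarith

end Schedule

variable {Ω : Type*} [MeasurableSpace Ω] {P : Measure Ω} [IsProbabilityMeasure P]
  {δ : ℕ → ℝ} {U : ℕ → ℕ → Ω → Bool}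

lemma bool_measurable (s : Set Bool) : MeasurableSet s := trivial

/-- Probability of a conjunction of outcomes at distinct coordinates factorizes. -/
lemma prodEv
    (hindep : iIndepFun (fun (q : ℕ × ℕ) ω => U q.1 q.2 ω) P)
    (L : List ((ℕ × ℕ) × Bool)) (hnd : (L.map Prod.fst).Nodup) :
    P {ω | ∀ e ∈ L, U e.1.1 e.1.2 ω = e.2}
      = (L.map (fun e => P {ω | U e.1.1 e.1.2 ω = e.2})).prod := by
  classical
  set S : Finset (ℕ × ℕ) := (L.map Prod.fst).toFinset with hS
  have huniq : ∀ e ∈ L, ∀ e' ∈ L, e.1 = e'.1 → e = e' := by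
    intro e he e' he' h
    exact List.inj_on_of_nodup_map hnd he he' h
  set sets : ℕ × ℕ → Set Bool := fun q => {x | ∀ e ∈ L, e.1 = q → x = e.2} with hsets
  have key := hindep.measure_inter_preimage_eq_mul S (sets := sets)
    (fun q _ => bool_measurable _)
  have h1 : (⋂ q ∈ S, (fun ω => U q.1 q.2 ω) ⁻¹' sets q)
      = {ω | ∀ e ∈ L, U e.1.1 e.1.2 ω = e.2} := by
    ext ω
    simp only [Set.mem_iInter, Set.mem_preimage, Set.mem_setOf_eq, hsets, hS,
      List.mem_toFinset, List.mem_map]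
    constructor
    · intro h e he
      exact (h e.1 ⟨e, he, rfl⟩ e he rfl).symm ▸ rfl
    · rintro h q ⟨e, he, rfl⟩ e' he' hq
      rw [← h e' he', hq]
  have h2 : ∀ e ∈ L, (fun ω => U e.1.1 e.1.2 ω) ⁻¹' sets e.1
      = {ω | U e.1.1 e.1.2 ω = e.2} := by
    intro e he
    ext ω
    simp only [Set.mem_preimage, hsets, Set.mem_setOf_eq]
    constructor
    · intro h; exact h e he rfl
    · intro h e' he' hq
      rw [huniq e' he' e he hq]; exact h
  rw [h1] at key
  rw [key, hS, List.prod_toFinset _ hnd, List.map_map]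
  congr 1
  refine List.map_congr_left ?_
  intro e he
  simp only [Function.comp_apply]
  rw [h2 e he]


/-- quadratic bound on exp on [-1,1] -/
lemma exp_quad {x : ℝ} (hx : |x| ≤ 1) : Real.exp x ≤ 1 + x + x ^ 2 := by
  have h := Real.exp_bound hx (n := 2) (by norm_num)
  have h2 : ∑ i ∈ Finset.range 2, x ^ i / (Nat.factorial i) = 1 + x := by
    simp [Finset.sum_range_succ, Nat.factorial]
  rw [h2] at h
  have hx2 : |x| ^ 2 = x ^ 2 := sq_abs x
  have := (abs_le.1 h).2
  rw [hx2] at this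
  norm_num at this
  nlinarith [sq_nonneg x]

/-- the Bernoulli mgf factor bound -/
lemma bern_factor {p l s : ℝ} (hp0 : 0 ≤ p) (hp1 : p ≤ 1) (hl0 : 0 ≤ l) (hl1 : l ≤ 1)
    (hs : s = 1 ∨ s = -1) :
    p * Real.exp (s * l * (1 - p)) + (1 - p) * Real.exp (s * l * (0 - p))
      ≤ Real.exp (l ^ 2) := by
  have hsl : |s * l| ≤ 1 := by rcases hs with h | h <;> rw [h] <;>
    simp [abs_of_nonneg hl0, abs_le] <;> exact hl1
  have hexp : Real.exp (s * l) ≤ 1 + s * l + l ^ 2 := by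
    have := exp_quad hsl
    have h2 : (s * l) ^ 2 = l ^ 2 := by rcases hs with h | h <;> rw [h] <;> ring
    linarith [h2 ▸ this]
  have key : p * Real.exp (s * l) + (1 - p) ≤ Real.exp (p * (s * l + l ^ 2)) := by
    have h1 : p * Real.exp (s * l) + (1 - p) ≤ 1 + p * (s * l + l ^ 2) := by nlinarith
    have h2 := Real.add_one_le_exp (p * (s * l + l ^ 2))
    linarith
  have e1 : Real.exp (s * l * (1 - p)) = Real.exp (-(s * l * p)) * Real.exp (s * l) := by
    rw [← Real.exp_add]; ring_nf
  have e2 : Real.exp (s * l * (0 - p)) = Real.exp (-(s * l * p)) := by ring_nf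
  have decomp : p * Real.exp (s * l * (1 - p)) + (1 - p) * Real.exp (s * l * (0 - p))
      = Real.exp (-(s * l * p)) * (p * Real.exp (s * l) + (1 - p)) := by
    rw [e1, e2]; ring
  rw [decomp]
  calc Real.exp (-(s * l * p)) * (p * Real.exp (s * l) + (1 - p))
      ≤ Real.exp (-(s * l * p)) * Real.exp (p * (s * l + l ^ 2)) := by
        apply mul_le_mul_of_nonneg_left key (Real.exp_pos _).le
    _ = Real.exp (p * l ^ 2) := by rw [← Real.exp_add]; ring_nf
    _ ≤ Real.exp (l ^ 2) := by
        apply Real.exp_le_exp.2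
        nlinarith [sq_nonneg l]

/-- Markov's inequality in exponential form. -/
lemma markov_exp (Z : Ω → ℝ) (hi : Integrable (fun ω => Real.exp (Z ω)) P) (K a : ℝ)
    (hK : ∫ ω, Real.exp (Z ω) ∂P ≤ K) :
    (P {ω | a ≤ Z ω}).toReal ≤ Real.exp (-a) * K := by
  have h1 : {ω | a ≤ Z ω} ⊆ {ω | Real.exp a ≤ Real.exp (Z ω)} :=
    fun ω h => Real.exp_le_exp.2 h
  have h2 := mul_meas_ge_le_integral_of_nonneg
    (ae_of_all _ fun ω => (Real.exp_pos (Z ω)).le) hi (Real.exp a)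
  have h3 : (P {ω | a ≤ Z ω}).toReal ≤ (P {x | Real.exp a ≤ Real.exp (Z x)}).toReal := by
    apply ENNReal.toReal_mono (measure_ne_top _ _) (measure_mono h1)
  have h4 : Real.exp a * (P {x | Real.exp a ≤ Real.exp (Z x)}).toReal ≤ K := le_trans h2 hK
  have h5 : (P {x | Real.exp a ≤ Real.exp (Z x)}).toReal ≤ Real.exp (-a) * K := by
    rw [Real.exp_neg]
    rw [inv_mul_eq_div, le_div_iff₀ (Real.exp_pos a)]
    linarith [h4]
  linarith
  
/-- Borel-Cantelli wrapper. -/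
lemma bc (A : ℕ → Set Ω) (K r : ℝ) (hr0 : 0 ≤ r) (hr1 : r < 1) (hK : 0 ≤ K)
    (h : ∀ n, (P (A n)).toReal ≤ K * r ^ n) :
    ∀ᵐ ω ∂P, ∀ᶠ n in atTop, ω ∉ A n := by
  apply ae_eventually_notMem
  have hb : ∀ n, P (A n) ≤ ENNReal.ofReal (K * r ^ n) := by
    intro n
    rw [← ENNReal.ofReal_toReal (measure_ne_top P (A n))]
    exact ENNReal.ofReal_le_ofReal (h n)
  have hsum : Summable (fun n => K * r ^ n) :=
    (summable_geometric_of_lt_one hr0 hr1).mul_left K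
  have hle : ∑' n, P (A n) ≤ ENNReal.ofReal (∑' n, K * r ^ n) := by
    calc ∑' n, P (A n) ≤ ∑' n, ENNReal.ofReal (K * r ^ n) := ENNReal.tsum_le_tsum hb
      _ = ENNReal.ofReal (∑' n, K * r ^ n) := by
          rw [ENNReal.ofReal_tsum_of_nonneg (fun n => by positivity) hsum]
  exact (lt_of_le_of_lt hle ENNReal.ofReal_lt_top).ne


lemma measurable_event (hmeas : ∀ i t, Measurable (U i t)) (i t : ℕ) (b : Bool) :
    MeasurableSet {ω | U i t ω = b} := by
  have : {ω | U i t ω = b} = U i t ⁻¹' {b} := by ext ω; simp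
  rw [this]; exact hmeas i t trivial

lemma integral_bool (hmeas : ∀ i t, Measurable (U i t)) (f : Bool → ℝ) (i t : ℕ) :
    ∫ ω, f (U i t ω) ∂P
      = f true * (P {ω | U i t ω = true}).toReal
        + f false * (P {ω | U i t ω = false}).toReal := by
  have hpt : (fun ω => f (U i t ω))
      = fun ω => Set.indicator {ω | U i t ω = true} (fun _ => f true) ω
        + Set.indicator {ω | U i t ω = false} (fun _ => f false) ω := by
    funext ω
    cases h : U i t ω <;>
      simp [Set.indicator_apply, Set.mem_setOf_eq, h]
  rw [hpt, integral_add
    ((integrable_const _).indicator (measurable_event hmeas i t true))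
    ((integrable_const _).indicator (measurable_event hmeas i t false)),
    integral_indicator_const _ (measurable_event hmeas i t true),
    integral_indicator_const _ (measurable_event hmeas i t false)]
  simp [smul_eq_mul, mul_comm]
  rfl


lemma intProd (hindep : iIndepFun (fun (q : ℕ × ℕ) ω => U q.1 q.2 ω) P)
    (hmeas : ∀ i t, Measurable (U i t)) {M : ℕ} (q : Fin M → ℕ × ℕ)
    (hq : Function.Injective q) (g : Fin M → Bool → ℝ) :
    ∫ ω, ∏ m, g m (U (q m).1 (q m).2 ω) ∂P
      = ∏ m, ∫ ω, g m (U (q m).1 (q m).2 ω) ∂P := by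
  classical
  set C : (Fin M → Bool) → Set Ω :=
    fun v => ⋂ m, {ω | U (q m).1 (q m).2 ω = v m} with hC
  have hmeasC : ∀ v, MeasurableSet (C v) :=
    fun v => MeasurableSet.iInter fun m => measurable_event hmeas _ _ _
  have hPC : ∀ v, P (C v) = ∏ m, P {ω | U (q m).1 (q m).2 ω = v m} := by
    intro v
    set L : List ((ℕ × ℕ) × Bool) := List.ofFn (fun m => (q m, v m)) with hL
    have hnd : (L.map Prod.fst).Nodup := by
      have : L.map Prod.fst = List.ofFn q := by
        rw [hL, List.map_ofFn]; rfl
      rw [this]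
      exact List.nodup_ofFn.mpr hq
    have hev : {ω | ∀ e ∈ L, U e.1.1 e.1.2 ω = e.2} = C v := by
      ext ω
      simp only [hC, Set.mem_iInter, Set.mem_setOf_eq, hL, List.mem_ofFn]
      constructor
      · intro h m; exact h (q m, v m) ⟨m, rfl⟩
      · rintro h e ⟨m, rfl⟩; exact h m
    rw [← hev, prodEv hindep L hnd, hL, List.map_ofFn, List.prod_ofFn]
    rfl
  have hpt : (fun ω => ∏ m, g m (U (q m).1 (q m).2 ω))
      = fun ω => ∑ v : Fin M → Bool,
          Set.indicator (C v) (fun _ => ∏ m, g m (v m)) ω := by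
    funext ω
    rw [Finset.sum_eq_single (fun m => U (q m).1 (q m).2 ω)]
    · rw [Set.indicator_of_mem (by simp [hC])]
    · intro v _ hv
      rw [Set.indicator_of_notMem]
      intro hmem
      apply hv
      funext m
      exact (Set.mem_iInter.1 hmem m).symm
    · intro h; exact absurd (Finset.mem_univ _) h
  rw [hpt, integral_finset_sum _
    (fun v _ => (integrable_const _).indicator (hmeasC v))]
  have hterm : ∀ v : Fin M → Bool,
      ∫ ω, Set.indicator (C v) (fun _ => ∏ m, g m (v m)) ω ∂P
        = ∏ m, (g m (v m) * (P {ω | U (q m).1 (q m).2 ω = v m}).toReal) := by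
    intro v
    rw [integral_indicator_const _ (hmeasC v), smul_eq_mul, measureReal_def, hPC v,
      ENNReal.toReal_prod, ← Finset.prod_mul_distrib]
    exact Finset.prod_congr rfl fun m _ => mul_comm _ _
  rw [Finset.sum_congr rfl (fun v _ => hterm v)]
  have hrhs : ∀ m, ∫ ω, g m (U (q m).1 (q m).2 ω) ∂P
      = ∑ b : Bool, g m b * (P {ω | U (q m).1 (q m).2 ω = b}).toReal := by
    intro m
    rw [integral_bool hmeas]
    simp
  rw [Finset.prod_congr rfl (fun m _ => hrhs m), Finset.prod_univ_sum]
  rw [Fintype.piFinset_univ]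


variable (p : List (Act × Bool) → Act)

/-- the event that the history at time `n` equals `h` -/
def cell (p : List (Act × Bool) → Act) (U : ℕ → ℕ → Ω → Bool)
    (n : ℕ) (h : List (Act × Bool)) : Set Ω :=
  {ω | (run p (fun i s => U i s ω) n).2.2 = h}

lemma cell_zero : cell p U 0 ([] : List (Act × Bool)) = Set.univ := by
  ext ω; simp [cell]; rfl

lemma cell_succ_g {n : ℕ} {h : List (Act × Bool)} (hh : h.length = n)
    (hact : p h = Act.g) (b : Bool) :
    cell p U (n+1) (h ++ [(Act.g, b)]) = cell p U n h ∩
      {ω | U (replay h).1.1 ((replay h).1.2 (replay h).1.1) ω = b} := by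
  ext ω
  set V : ℕ → ℕ → Bool := fun i s => U i s ω with hV
  simp only [cell, Set.mem_inter_iff, Set.mem_setOf_eq]
  constructor
  · intro hmem
    rw [hist_succ] at hmem
    have hinj := List.append_inj' hmem (by simp)
    have hq : (run p V n).2.2 = h := hinj.1
    have he : (p ((run p V n).2.2), rewB p V n) = (Act.g, b) := by simpa using hinj.2
    refine ⟨hq, ?_⟩
    obtain ⟨h1, h2, -, -, -⟩ := replay_run p V n
    have : rewB p V n = b := congrArg Prod.snd he
    rw [← this]
    unfold rewB
    rw [hq, hact, ← hq, h1, h2]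
  · rintro ⟨hq, hU⟩
    obtain ⟨h1, h2, -, -, -⟩ := replay_run p (fun i s => U i s ω) n
    rw [hq] at h1 h2
    have hrew : rewB p (fun i s => U i s ω) n = b := by
      unfold rewB
      rw [hq, hact, ← h1, ← h2]
      exact hU
    rw [hist_succ, hq, hrew, hact]
  
lemma cell_succ_ng {n : ℕ} {h : List (Act × Bool)} (hh : h.length = n)
    (hact : p h ≠ Act.g) :
    cell p U (n+1) (h ++ [(p h, false)]) = cell p U n h := by
  ext ω
  set V : ℕ → ℕ → Bool := fun i s => U i s ω with hV
  simp only [cell, Set.mem_setOf_eq]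
  constructor
  · intro hmem
    rw [hist_succ] at hmem
    exact (List.append_inj' hmem (by simp)).1
  · intro hq
    rw [hist_succ, hq]
    congr 1
    have : rewB p V n = false := by
      unfold rewB
      rw [hq]
      rcases hact' : p h with _ | _ | _
      · exact absurd hact' hact
      · simp
      · simp
    rw [this]

lemma cell_event {n : ℕ} {h : List (Act × Bool)} (hne : (cell p U n h).Nonempty) :
    cell p U n h = {ω | ∀ e ∈ (replay h).2, U e.1.1 e.1.2 ω = e.2} := by
  obtain ⟨ω₀, hω₀⟩ := hne
  set V₀ : ℕ → ℕ → Bool := fun i s => U i s ω₀ with hV₀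
  have hh0 : (run p V₀ n).2.2 = h := hω₀
  ext ω
  set V : ℕ → ℕ → Bool := fun i s => U i s ω with hV
  simp only [cell, Set.mem_setOf_eq]
  constructor
  · intro hq
    have := (replay_run p V n).2.2.1
    rw [hq] at this
    exact this
  · intro hU
    have hcong : run p V n = run p V₀ n := by
      apply run_congr
      rw [hh0]
      exact hU
    rw [hcong, hh0]

lemma cell_props {n : ℕ} {h : List (Act × Bool)} (hne : (cell p U n h).Nonempty) :
    (((replay h).2.map Prod.fst).Nodup) ∧
      (∀ e ∈ (replay h).2, e.1.2 < (replay h).1.2 e.1.1) := by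
  obtain ⟨ω₀, hω₀⟩ := hne
  set V₀ : ℕ → ℕ → Bool := fun i s => U i s ω₀ with hV₀
  have hh0 : (run p V₀ n).2.2 = h := hω₀
  obtain ⟨h1, h2, h3, h4, h5⟩ := replay_run p V₀ n
  rw [hh0] at h1 h2 h4 h5
  exact ⟨h5, fun e he => by rw [h2]; exact h4 e he⟩

lemma cell_measurable (hmeas : ∀ i t, Measurable (U i t)) (n : ℕ)
    (h : List (Act × Bool)) : MeasurableSet (cell p U n h) := by
  rcases Set.eq_empty_or_nonempty (cell p U n h) with he | hne
  · rw [he]; exact MeasurableSet.empty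
  · rw [cell_event p hne]
    have : {ω | ∀ e ∈ (replay h).2, U e.1.1 e.1.2 ω = e.2}
        = ⋂ e ∈ (replay h).2.toFinset, {ω | U e.1.1 e.1.2 ω = e.2} := by
      ext ω; simp [List.mem_toFinset]
    rw [this]
    apply Finset.measurableSet_biInter
    intro e _
    have : {ω | U e.1.1 e.1.2 ω = e.2} = U e.1.1 e.1.2 ⁻¹' {e.2} := by ext ω; simp
    rw [this]; exact hmeas e.1.1 e.1.2 trivial

/-- the key factorization for the g-split of a cell -/
lemma cell_factor (hindep : iIndepFun (fun (q : ℕ × ℕ) ω => U q.1 q.2 ω) P)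
    {n : ℕ} {h : List (Act × Bool)} (hne : (cell p U n h).Nonempty) (b : Bool) :
    P (cell p U n h ∩
        {ω | U (replay h).1.1 ((replay h).1.2 (replay h).1.1) ω = b})
      = P (cell p U n h) *
        P {ω | U (replay h).1.1 ((replay h).1.2 (replay h).1.1) ω = b} := by
  obtain ⟨hnd, hlt⟩ := cell_props p hne
  set q : ℕ × ℕ := ((replay h).1.1, (replay h).1.2 (replay h).1.1) with hq
  set L : List ((ℕ × ℕ) × Bool) := (replay h).2 with hL
  have hfresh : q ∉ L.map Prod.fst := by
    intro hmem
    obtain ⟨e, he, hfst⟩ := List.mem_map.1 hmem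
    have := hlt e he
    rw [hfst] at this
    simp [hq] at this
  have hnd' : ((L ++ [(q, b)]).map Prod.fst).Nodup := by
    rw [List.map_append, List.nodup_append']
    exact ⟨hnd, by simp, by simpa using hfresh⟩
  have hset : cell p U n h ∩ {ω | U q.1 q.2 ω = b}
      = {ω | ∀ e ∈ L ++ [(q, b)], U e.1.1 e.1.2 ω = e.2} := by
    rw [cell_event p hne]
    ext ω
    simp only [Set.mem_inter_iff, Set.mem_setOf_eq, List.mem_append, List.mem_singleton]
    constructor
    · rintro ⟨h1, h2⟩ e (he | he)
      · exact h1 e he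
      · subst he; exact h2
    · intro h1
      exact ⟨fun e he => h1 e (Or.inl he), h1 (q, b) (Or.inr rfl)⟩
  rw [hset, prodEv hindep _ hnd', cell_event p hne, prodEv hindep _ hnd,
    List.map_append, List.prod_append]
  simp
  rfl


lemma ptrue_toReal {δ : ℕ → ℝ} (hber : ∀ i t, P {ω | U i t ω = true} = ENNReal.ofReal (δ i))
    (hδ : ∀ i, δ i ∈ Set.Icc (0:ℝ) 1) (i s : ℕ) :
    (P {ω | U i s ω = true}).toReal = δ i := by
  rw [hber]; exact ENNReal.toReal_ofReal (hδ i).1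

lemma pfalse_toReal {δ : ℕ → ℝ} (hmeas : ∀ i t, Measurable (U i t))
    (hber : ∀ i t, P {ω | U i t ω = true} = ENNReal.ofReal (δ i))
    (hδ : ∀ i, δ i ∈ Set.Icc (0:ℝ) 1) (i s : ℕ) :
    (P {ω | U i s ω = false}).toReal = 1 - δ i := by
  have hc : {ω | U i s ω = false} = {ω | U i s ω = true}ᶜ := by
    ext ω; simp
  have hm : MeasurableSet {ω | U i s ω = true} := by
    have : {ω | U i s ω = true} = U i s ⁻¹' {true} := by ext ω; simp
    rw [this]; exact hmeas i s trivial
  rw [hc, prob_compl_eq_one_sub hm, hber]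
  rw [ENNReal.toReal_sub_of_le (by
    simpa using ENNReal.ofReal_le_one.2 (hδ i).2) ENNReal.one_ne_top]
  simp [ENNReal.toReal_ofReal (hδ i).1]

/-- exponential-moment weight of the history tree at time n -/
noncomputable def W (P : Measure Ω) (p : List (Act × Bool) → Act) (U : ℕ → ℕ → Ω → Bool)
    (l : ℝ) (n : ℕ) : ℝ :=
  ∑ h ∈ Hs p n, Real.exp (l * kk h) * (P (cell p U n h)).toReal

lemma expS_repr (l : ℝ) (n : ℕ) :
    (fun ω => Real.exp (l * ∑ t ∈ Finset.range n,
        (if rewB p (fun i s => U i s ω) t then (1:ℝ) else 0)))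
    = fun ω => ∑ h ∈ Hs p n,
        Set.indicator (cell p U n h) (fun _ => Real.exp (l * kk h)) ω := by
  funext ω
  rw [Finset.sum_eq_single ((run p (fun i s => U i s ω) n).2.2)]
  · rw [Set.indicator_of_mem (show ω ∈ cell p U n _ from rfl), sum_rewB]
  · intro h _ hne
    rw [Set.indicator_of_notMem]
    intro hc
    exact hne (Eq.symm hc)
  · intro habs; exact absurd (mem_Hs p _ n) habs

lemma integrable_expS (hmeas : ∀ i t, Measurable (U i t)) (l : ℝ) (n : ℕ) :
    Integrable (fun ω => Real.exp (l * ∑ t ∈ Finset.range n,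
        (if rewB p (fun i s => U i s ω) t then (1:ℝ) else 0))) P := by
  rw [expS_repr]
  exact integrable_finset_sum _
    (fun h _ => (integrable_const _).indicator (cell_measurable p hmeas n h))

lemma integral_expS (hmeas : ∀ i t, Measurable (U i t)) (l : ℝ) (n : ℕ) :
    ∫ ω, Real.exp (l * ∑ t ∈ Finset.range n,
        (if rewB p (fun i s => U i s ω) t then (1:ℝ) else 0)) ∂P = W P p U l n := by
  rw [expS_repr, integral_finset_sum _
    (fun h _ => (integrable_const _).indicator (cell_measurable p hmeas n h))]
  unfold W
  refine Finset.sum_congr rfl fun h _ => ?_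
  rw [integral_indicator_const _ (cell_measurable p hmeas n h), smul_eq_mul, mul_comm]
  rfl

lemma kk_append (h : List (Act × Bool)) (e : Act × Bool) :
    (kk (h ++ [e]) : ℝ) = kk h + (if e.2 then (1:ℝ) else 0) := by
  unfold kk
  rw [List.filter_append, List.length_append]
  rcases hb : e.2 <;> simp [hb]

lemma W_zero : W P p U l 0 = 1 := by
  have : Hs p 0 = {([] : List (Act × Bool))} := rfl
  rw [W, this, Finset.sum_singleton, cell_zero]
  simp [kk]

lemma children_shape (h x : List (Act × Bool))
    (hx : x ∈ (if p h = Act.g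
      then ({h ++ [(Act.g, true)], h ++ [(Act.g, false)]} : Finset (List (Act × Bool)))
      else {h ++ [(p h, false)]})) : ∃ e, x = h ++ [e] := by
  split_ifs at hx
  · rcases Finset.mem_insert.1 hx with h1 | h1
    · exact ⟨_, h1⟩
    · exact ⟨_, Finset.mem_singleton.1 h1⟩
  · exact ⟨_, Finset.mem_singleton.1 hx⟩

lemma Hs_succ (n : ℕ) : Hs p (n + 1) = (Hs p n).biUnion fun h =>
    if p h = Act.g then ({h ++ [(Act.g, true)], h ++ [(Act.g, false)]} : Finset _)
    else {h ++ [(p h, false)]} := by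
  rw [Hs]

lemma W_succ {δ : ℕ → ℝ} {sδ l : ℝ}
    (hmeas : ∀ i t, Measurable (U i t))
    (hindep : iIndepFun (fun (q : ℕ × ℕ) ω => U q.1 q.2 ω) P)
    (hber : ∀ i t, P {ω | U i t ω = true} = ENNReal.ofReal (δ i))
    (hδ : ∀ i, δ i ∈ Set.Icc (0:ℝ) 1)
    (hsδ : ∀ i, δ i ≤ sδ) (hsδ0 : 0 ≤ sδ) (hl : 0 ≤ l) (n : ℕ) :
    W P p U l (n + 1) ≤ (1 + sδ * (Real.exp l - 1)) * W P p U l n := by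
  classical
  set c : ℝ := 1 + sδ * (Real.exp l - 1) with hc
  have hX1 : (1:ℝ) ≤ Real.exp l := Real.one_le_exp hl
  have hc1 : 1 ≤ c := by nlinarith
  have hdisj : (↑(Hs p n) : Set (List (Act × Bool))).PairwiseDisjoint
      (fun h => if p h = Act.g
        then ({h ++ [(Act.g, true)], h ++ [(Act.g, false)]} : Finset (List (Act × Bool)))
        else {h ++ [(p h, false)]}) := by
    intro h₁ hh₁ h₂ hh₂ hne
    simp only [Function.onFun]
    rw [Finset.disjoint_left]
    intro x hx1 hx2
    obtain ⟨e₁, rfl⟩ := children_shape p h₁ x hx1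
    obtain ⟨e₂, he₂⟩ := children_shape p h₂ _ hx2
    exact hne (List.append_inj' he₂ (by simp)).1
  rw [W, Hs_succ, Finset.sum_biUnion hdisj]
  have hbound : ∀ h ∈ Hs p n,
      (∑ x ∈ (if p h = Act.g
        then ({h ++ [(Act.g, true)], h ++ [(Act.g, false)]} : Finset (List (Act × Bool)))
        else {h ++ [(p h, false)]}),
        Real.exp (l * kk x) * (P (cell p U (n+1) x)).toReal)
      ≤ c * (Real.exp (l * kk h) * (P (cell p U n h)).toReal) := by
    intro h hh
    have hlen : h.length = n := Hs_len p n h hh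
    have hPp0 : 0 ≤ (P (cell p U n h)).toReal := ENNReal.toReal_nonneg
    have hE0 : 0 < Real.exp (l * kk h) := Real.exp_pos _
    by_cases hact : p h = Act.g
    · rw [if_pos hact]
      have hne12 : h ++ [(Act.g, true)] ≠ h ++ [(Act.g, false)] := by simp
      rw [Finset.sum_pair hne12]
      rcases Set.eq_empty_or_nonempty (cell p U n h) with hemp | hne
      · have h0 : ∀ b, P (cell p U (n+1) (h ++ [(Act.g, b)])) = 0 := by
          intro b
          rw [cell_succ_g p hlen hact b, hemp]
          simp
        rw [h0 true, h0 false, hemp]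
        simp
      · set i := (replay h).1.1 with hi
        set s := (replay h).1.2 (replay h).1.1 with hs
        have hfac : ∀ b, (P (cell p U (n+1) (h ++ [(Act.g, b)]))).toReal
            = (P (cell p U n h)).toReal * (P {ω | U i s ω = b}).toReal := by
          intro b
          rw [cell_succ_g p hlen hact b, cell_factor p hindep hne b, ENNReal.toReal_mul]
        rw [hfac true, hfac false, ptrue_toReal hber hδ, pfalse_toReal hmeas hber hδ]
        rw [kk_append, kk_append]
        simp only [if_pos, if_neg, Bool.false_eq_true, not_false_eq_true, ite_true, ite_false]
        have he1 : Real.exp (l * (kk h + 1)) = Real.exp (l * kk h) * Real.exp l := by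
          rw [← Real.exp_add]; ring_nf
        have he0 : Real.exp (l * (kk h + 0)) = Real.exp (l * kk h) := by norm_num
        rw [he1, he0]
        have hd0 : 0 ≤ δ i := (hδ i).1
        have hd1 : δ i ≤ 1 := (hδ i).2
        have hds : δ i ≤ sδ := hsδ i
        have key : δ i * Real.exp l + (1 - δ i) ≤ c := by nlinarith
        nlinarith [mul_nonneg hE0.le hPp0]
    · rw [if_neg hact, Finset.sum_singleton, cell_succ_ng p hlen hact, kk_append]
      have hrew : (if (p h, false).2 then (1:ℝ) else 0) = 0 := by simp
      rw [hrew, add_zero]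
      nlinarith [mul_nonneg hE0.le hPp0]
  calc ∑ h ∈ Hs p n, _ ≤ ∑ h ∈ Hs p n,
        c * (Real.exp (l * kk h) * (P (cell p U n h)).toReal) :=
      Finset.sum_le_sum hbound
    _ = c * W P p U l n := by rw [← Finset.mul_sum]; rfl

lemma W_nonneg (l : ℝ) (n : ℕ) : 0 ≤ W P p U l n :=
  Finset.sum_nonneg fun h _ => mul_nonneg (Real.exp_pos _).le ENNReal.toReal_nonneg

lemma W_le {δ : ℕ → ℝ} {sδ l : ℝ}
    (hmeas : ∀ i t, Measurable (U i t))
    (hindep : iIndepFun (fun (q : ℕ × ℕ) ω => U q.1 q.2 ω) P)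
    (hber : ∀ i t, P {ω | U i t ω = true} = ENNReal.ofReal (δ i))
    (hδ : ∀ i, δ i ∈ Set.Icc (0:ℝ) 1)
    (hsδ : ∀ i, δ i ≤ sδ) (hsδ0 : 0 ≤ sδ) (hl : 0 ≤ l) (n : ℕ) :
    W P p U l n ≤ (1 + sδ * (Real.exp l - 1)) ^ n := by
  induction n with
  | zero => rw [W_zero]; simp
  | succ n ih =>
    have hX1 : (1:ℝ) ≤ Real.exp l := Real.one_le_exp hl
    have hcpos : 0 ≤ 1 + sδ * (Real.exp l - 1) := by nlinarith
    calc W P p U l (n+1) ≤ (1 + sδ * (Real.exp l - 1)) * W P p U l n :=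
        W_succ p hmeas hindep hber hδ hsδ hsδ0 hl n
      _ ≤ (1 + sδ * (Real.exp l - 1)) * (1 + sδ * (Real.exp l - 1)) ^ n :=
        mul_le_mul_of_nonneg_left ih hcpos
      _ = (1 + sδ * (Real.exp l - 1)) ^ (n + 1) := by ring


lemma parta
    (hδ : ∀ i, δ i ∈ Set.Icc (0 : ℝ) 1)
    (hmeas : ∀ i t, Measurable (U i t))
    (hindep : iIndepFun (fun (q : ℕ × ℕ) ω => U q.1 q.2 ω) P)
    (hber : ∀ i t, P {ω | U i t ω = true} = ENNReal.ofReal (δ i))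
    (p : List (Act × Bool) → Act) : ∀ᵐ ω ∂P,
      limsup (fun n : ℕ =>
        (∑ t ∈ Finset.range n,
          (if rewB p (fun i s => U i s ω) t then (1 : ℝ) else 0)) / n) atTop ≤ ⨆ i, δ i := by
  set sδ : ℝ := ⨆ i, δ i with hsδdef
  have hbdd : BddAbove (Set.range δ) := ⟨1, by rintro x ⟨i, rfl⟩; exact (hδ i).2⟩
  have hsδ : ∀ i, δ i ≤ sδ := fun i => le_ciSup hbdd i
  have hsδ0 : 0 ≤ sδ := le_trans (hδ 0).1 (hsδ 0)
  have hsδ1 : sδ ≤ 1 := ciSup_le fun i => (hδ i).2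
  set S : ℕ → Ω → ℝ := fun n ω => ∑ t ∈ Finset.range n,
      (if rewB p (fun i s => U i s ω) t then (1 : ℝ) else 0) with hS
  have key : ∀ k : ℕ, ∀ᵐ ω ∂P,
      limsup (fun n : ℕ => S n ω / n) atTop ≤ sδ + 1/((k:ℝ)+1) := by
    intro k
    set ε : ℝ := 1/((k:ℝ)+1) with hεdef
    have hε : 0 < ε := by positivity
    have hε1 : ε ≤ 1 := by
      rw [hεdef, div_le_one (by positivity)]
      simp
    set l : ℝ := ε/2 with hldef
    have hl0 : 0 < l := by positivity
    have hl1 : l ≤ 1 := by rw [hldef]; linarith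
    set r : ℝ := Real.exp (l^2 - l*ε) with hrdef
    have hr0 : 0 ≤ r := (Real.exp_pos _).le
    have hr1 : r < 1 := by
      rw [hrdef, Real.exp_lt_one_iff]
      nlinarith
    set c : ℝ := 1 + sδ * (Real.exp l - 1) with hcdef
    have hX1 : (1:ℝ) ≤ Real.exp l := Real.one_le_exp hl0.le
    have hc0 : 0 ≤ c := by nlinarith
    have hcle : c ≤ Real.exp (sδ * (l + l^2)) := by
      have hq := exp_quad (x := l) (by rw [abs_of_nonneg hl0.le]; exact hl1)
      have h1 : c ≤ 1 + sδ * (l + l^2) := by nlinarith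
      have h2 := Real.add_one_le_exp (sδ * (l + l^2))
      linarith
    have tail : ∀ n : ℕ, (P {ω | (n:ℝ)*(sδ+ε) ≤ S n ω}).toReal ≤ 1 * r^n := by
      intro n
      have hmark := markov_exp (P := P) (fun ω => l * S n ω)
        (integrable_expS p hmeas l n) (c^n) (l * ((n:ℝ)*(sδ+ε)))
        (by rw [integral_expS p hmeas l n]
            exact W_le p hmeas hindep hber hδ hsδ hsδ0 hl0.le n)
      have hsub : {ω | (n:ℝ)*(sδ+ε) ≤ S n ω} ⊆ {ω | l * ((n:ℝ)*(sδ+ε)) ≤ l * S n ω} :=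
        fun ω hω => mul_le_mul_of_nonneg_left hω hl0.le
      have hmono : (P {ω | (n:ℝ)*(sδ+ε) ≤ S n ω}).toReal
          ≤ (P {ω | l * ((n:ℝ)*(sδ+ε)) ≤ l * S n ω}).toReal :=
        ENNReal.toReal_mono (measure_ne_top _ _) (measure_mono hsub)
      have hfin : Real.exp (-(l * ((n:ℝ)*(sδ+ε)))) * c^n ≤ 1 * r^n := by
        have h1 : c^n ≤ Real.exp (sδ * (l + l^2))^n := pow_le_pow_left₀ hc0 hcle n
        have h2 : Real.exp (-(l * ((n:ℝ)*(sδ+ε)))) * Real.exp (sδ * (l + l^2))^n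
            = Real.exp ((n:ℝ) * (sδ * (l + l^2) - l*(sδ+ε))) := by
          rw [← Real.exp_nat_mul, ← Real.exp_add]
          ring_nf
        have h3 : (n:ℝ) * (sδ * (l + l^2) - l*(sδ+ε)) ≤ (n:ℝ) * (l^2 - l*ε) := by
          apply mul_le_mul_of_nonneg_left _ (Nat.cast_nonneg n)
          nlinarith
        calc Real.exp (-(l * ((n:ℝ)*(sδ+ε)))) * c^n
            ≤ Real.exp (-(l * ((n:ℝ)*(sδ+ε)))) * Real.exp (sδ * (l + l^2))^n :=
              mul_le_mul_of_nonneg_left h1 (Real.exp_pos _).le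
          _ = Real.exp ((n:ℝ) * (sδ * (l + l^2) - l*(sδ+ε))) := h2
          _ ≤ Real.exp ((n:ℝ) * (l^2 - l*ε)) := Real.exp_le_exp.2 h3
          _ = 1 * r^n := by rw [one_mul, hrdef, ← Real.exp_nat_mul]
      exact le_trans hmono (le_trans hmark hfin)
    have hbc := bc (P := P) (fun n => {ω | (n:ℝ)*(sδ+ε) ≤ S n ω}) 1 r hr0 hr1
      zero_le_one tail
    filter_upwards [hbc] with ω hω
    have hev : ∀ᶠ n : ℕ in atTop, S n ω / n ≤ sδ + ε := by
      filter_upwards [hω, eventually_ge_atTop 1] with n hn hn1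
      have hnpos : (0:ℝ) < n := by exact_mod_cast hn1
      rw [div_le_iff₀ hnpos]
      rw [not_le] at hn
      nlinarith
    have h0 : ∀ᶠ n : ℕ in atTop, (0:ℝ) ≤ S n ω / n := by
      apply Eventually.of_forall
      intro n
      apply div_nonneg _ (Nat.cast_nonneg n)
      apply Finset.sum_nonneg
      intro t _
      split <;> norm_num
    have hcb : IsCoboundedUnder (· ≤ ·) atTop (fun n : ℕ => S n ω / n) :=
      (isBoundedUnder_of_eventually_ge h0).isCoboundedUnder_le
    exact limsup_le_of_le hcb hev
  filter_upwards [ae_all_iff.2 key] with ω hω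
  apply le_of_forall_pos_le_add
  intro ε hε
  obtain ⟨k, hk⟩ := exists_nat_one_div_lt hε
  calc limsup (fun n : ℕ => S n ω / n) atTop ≤ sδ + 1/((k:ℝ)+1) := hω k
    _ ≤ sδ + ε := by linarith

lemma partb
    (hδ : ∀ i, δ i ∈ Set.Icc (0 : ℝ) 1)
    (hmeas : ∀ i t, Measurable (U i t))
    (hindep : iIndepFun (fun (q : ℕ × ℕ) ω => U q.1 q.2 ω) P)
    (hber : ∀ i t, P {ω | U i t ω = true} = ENNReal.ofReal (δ i)) :
    ∃ p : List (Act × Bool) → Act, ∀ᵐ ω ∂P,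
      Tendsto (fun n : ℕ =>
        (∑ t ∈ Finset.range n,
          (if rewB p (fun i s => U i s ω) t then (1 : ℝ) else 0)) / n)
        atTop (nhds (⨆ i, δ i)) := by
  classical
  set sδ : ℝ := ⨆ i, δ i with hsδdef
  have hbdd : BddAbove (Set.range δ) := ⟨1, by rintro x ⟨i, rfl⟩; exact (hδ i).2⟩
  have hsδ : ∀ i, δ i ≤ sδ := fun i => le_ciSup hbdd i
  have hsδ0 : 0 ≤ sδ := le_trans (hδ 0).1 (hsδ 0)
  have harm0 : ∀ j : ℕ, ∃ i, sδ - 1/((j:ℝ)+1) < δ i := by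
    intro j
    apply exists_lt_of_lt_ciSup
    have : (0:ℝ) < 1/((j:ℝ)+1) := by positivity
    linarith
  choose arm harm using harm0
  refine ⟨pol arm, ?_⟩
  set pm : ℕ → ℝ := fun m => δ ((pr arm m).1) with hpm
  set Y : ℕ → Ω → ℝ := fun m ω =>
    if U (pr arm m).1 (pr arm m).2 ω then (1:ℝ) else 0 with hY
  set D : ℕ → Ω → ℝ := fun M ω => ∑ m ∈ Finset.range M, (Y m ω - pm m) with hD
  have hpm01 : ∀ m, pm m ∈ Set.Icc (0:ℝ) 1 := fun m => hδ _
  have hpmle : ∀ m, pm m ≤ sδ := fun m => hsδ _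
  -- Step A : the means of successive pulls converge to the supremum
  have stepA : Tendsto pm atTop (nhds sδ) := by
    rw [Metric.tendsto_atTop]
    intro ε hε
    obtain ⟨k, hk⟩ := exists_nat_one_div_lt (K := ℝ) hε
    refine ⟨TT arm k, fun m hm => ?_⟩
    have hgt : TT arm k ≤ gt arm m := le_trans hm (le_gt arm m)
    have hph : k ≤ ph arm (gt arm m) := le_ph arm hgt
    have hidx : (pr arm m).1 = arm (ph arm (gt arm m)) := g_arm arm (gt_g arm m)
    have hlow := harm (ph arm (gt arm m))
    have h1j : 1/((ph arm (gt arm m) : ℝ)+1) ≤ 1/((k:ℝ)+1) := by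
      apply one_div_le_one_div_of_le (by positivity)
      have : (k:ℝ) ≤ ph arm (gt arm m) := by exact_mod_cast hph
      linarith
    rw [Real.dist_eq, abs_of_nonpos (sub_nonpos.2 (hpmle m))]
    have hval : pm m = δ (arm (ph arm (gt arm m))) := by rw [hpm]; simp only; rw [hidx]
    rw [hval]
    linarith
  -- Step B : Cesàro means
  have stepB : Tendsto (fun M : ℕ => (∑ m ∈ Finset.range M, pm m)/M) atTop (nhds sδ) :=
    stepA.cesaro.congr (fun n => inv_mul_eq_div _ _)
  -- Step C : Chernoff + Borel-Cantelli for each tolerance and sign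
  have stepC : ∀ (k : ℕ) (s : ℝ), (s = 1 ∨ s = -1) → ∀ᵐ ω ∂P, ∀ᶠ M : ℕ in atTop,
      ω ∉ {ω' | (M:ℝ) * (1/((k:ℝ)+1)) ≤ s * D M ω'} := by
    intro k s hs
    set ε : ℝ := 1/((k:ℝ)+1) with hεdef
    have hε : 0 < ε := by positivity
    have hε1 : ε ≤ 1 := by
      rw [hεdef, div_le_one (by positivity)]
      simp
    set l : ℝ := ε/2 with hldef
    have hl0 : 0 < l := by positivity
    have hl1 : l ≤ 1 := by rw [hldef]; linarith
    set r : ℝ := Real.exp (l^2 - l*ε) with hrdef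
    have hr0 : 0 ≤ r := (Real.exp_pos _).le
    have hr1 : r < 1 := by
      rw [hrdef, Real.exp_lt_one_iff]
      nlinarith
    apply bc (P := P) _ 1 r hr0 hr1 zero_le_one
    intro M
    set g : ℕ → Bool → ℝ :=
      fun m b => Real.exp (s * l * ((if b then (1:ℝ) else 0) - pm m)) with hgdef
    have hgpos : ∀ m b, 0 < g m b := fun m b => Real.exp_pos _
    have hrepr : ∀ ω, Real.exp (l * (s * D M ω))
        = ∏ m : Fin M, g (m:ℕ) (U (pr arm (m:ℕ)).1 (pr arm (m:ℕ)).2 ω) := by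
      intro ω
      have h1 : l * (s * D M ω) = ∑ m ∈ Finset.range M, (s * l * (Y m ω - pm m)) := by
        rw [show l * (s * D M ω) = s * l * D M ω by ring, hD]
        simp only
        rw [Finset.mul_sum]
      rw [h1, Real.exp_sum, ← Fin.prod_univ_eq_prod_range]
    have hmeasf : ∀ (m : ℕ), Measurable
        (fun ω => g m (U (pr arm m).1 (pr arm m).2 ω)) := by
      intro m
      have heq : (fun ω => g m (U (pr arm m).1 (pr arm m).2 ω))
          = fun ω => if U (pr arm m).1 (pr arm m).2 ω = true
              then g m true else g m false := by
        funext ω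
        rcases h : U (pr arm m).1 (pr arm m).2 ω <;> simp [h]
      rw [heq]
      exact Measurable.ite (measurable_event hmeas _ _ true)
        measurable_const measurable_const
    have hint : Integrable (fun ω => Real.exp (l * (s * D M ω))) P := by
      rw [show (fun ω => Real.exp (l * (s * D M ω))) = _ from funext hrepr]
      apply Integrable.mono'
        (g := fun _ => ∏ m : Fin M, max (g (m:ℕ) true) (g (m:ℕ) false))
        (integrable_const _)
      · exact (Finset.measurable_prod (Finset.univ : Finset (Fin M))
          (fun m _ => hmeasf (m : ℕ))).aestronglyMeasurable
      · apply ae_of_all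
        intro ω
        rw [Real.norm_eq_abs, Finset.abs_prod]
        apply Finset.prod_le_prod (fun m _ => abs_nonneg _)
        intro m _
        rcases h : U (pr arm (m:ℕ)).1 (pr arm (m:ℕ)).2 ω
        · rw [abs_of_pos (hgpos _ _)]; exact le_max_right _ _
        · rw [abs_of_pos (hgpos _ _)]; exact le_max_left _ _
    have hqinj : Function.Injective (fun m : Fin M => pr arm (m:ℕ)) := by
      intro a b hab
      exact Fin.ext (pr_inj arm hab)
    have hEbound : ∫ ω, Real.exp (l * (s * D M ω)) ∂P ≤ (Real.exp (l^2))^M := by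
      rw [show (fun ω => Real.exp (l * (s * D M ω))) = _ from funext hrepr]
      rw [intProd hindep hmeas (fun m : Fin M => pr arm (m:ℕ)) hqinj
        (fun m : Fin M => g (m:ℕ))]
      have hfac : ∀ m : Fin M,
          ∫ ω, g (m:ℕ) (U (pr arm (m:ℕ)).1 (pr arm (m:ℕ)).2 ω) ∂P
            ≤ Real.exp (l^2) := by
        intro m
        rw [integral_bool hmeas, ptrue_toReal hber hδ, pfalse_toReal hmeas hber hδ]
        have hb := bern_factor (p := pm (m:ℕ)) (l := l) (s := s)
          (hpm01 _).1 (hpm01 _).2 hl0.le hl1 hs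
        have hgt : g (m:ℕ) true = Real.exp (s * l * (1 - pm (m:ℕ))) := by
          rw [hgdef]; simp
        have hgf : g (m:ℕ) false = Real.exp (s * l * (0 - pm (m:ℕ))) := by
          rw [hgdef]; simp
        rw [hgt, hgf]
        have hpmval : δ ((pr arm (m:ℕ)).1) = pm (m:ℕ) := rfl
        rw [hpmval]
        nlinarith [Real.exp_pos (s * l * (1 - pm (m:ℕ))),
          Real.exp_pos (s * l * (0 - pm (m:ℕ)))]
      calc ∏ m : Fin M, ∫ ω, g (m:ℕ) (U (pr arm (m:ℕ)).1 (pr arm (m:ℕ)).2 ω) ∂P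
          ≤ ∏ _m : Fin M, Real.exp (l^2) := by
            apply Finset.prod_le_prod
            · intro m _
              exact integral_nonneg fun ω => (hgpos _ _).le
            · intro m _
              exact hfac m
        _ = (Real.exp (l^2))^M := by
            rw [Finset.prod_const, Finset.card_univ, Fintype.card_fin]
    have hmark := markov_exp (P := P) (fun ω => l * (s * D M ω)) hint
      ((Real.exp (l^2))^M) (l * ((M:ℝ) * ε)) hEbound
    have hsub : {ω | (M:ℝ)*ε ≤ s * D M ω} ⊆ {ω | l * ((M:ℝ)*ε) ≤ l * (s * D M ω)} :=
      fun ω hω => mul_le_mul_of_nonneg_left hω hl0.le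
    have hmono : (P {ω | (M:ℝ)*ε ≤ s * D M ω}).toReal
        ≤ (P {ω | l * ((M:ℝ)*ε) ≤ l * (s * D M ω)}).toReal :=
      ENNReal.toReal_mono (measure_ne_top _ _) (measure_mono hsub)
    have hfin : Real.exp (-(l * ((M:ℝ)*ε))) * (Real.exp (l^2))^M ≤ 1 * r^M := by
      rw [one_mul, hrdef, ← Real.exp_nat_mul, ← Real.exp_nat_mul, ← Real.exp_add]
      apply Real.exp_le_exp.2
      apply le_of_eq
      ring
    exact le_trans hmono (le_trans hmark hfin)
  -- Step D : almost sure convergence of the centered averages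
  have hDlim : ∀ᵐ ω ∂P, Tendsto (fun M : ℕ => D M ω / M) atTop (nhds 0) := by
    have h1 := ae_all_iff.2 (fun k => stepC k 1 (Or.inl rfl))
    have h2 := ae_all_iff.2 (fun k => stepC k (-1) (Or.inr rfl))
    filter_upwards [h1, h2] with ω hω1 hω2
    rw [Metric.tendsto_nhds]
    intro ε hε
    obtain ⟨k, hk⟩ := exists_nat_one_div_lt (K := ℝ) hε
    filter_upwards [hω1 k, hω2 k, eventually_ge_atTop 1] with M hM1 hM2 hM3
    rw [not_le] at hM1 hM2
    have hMpos : (0:ℝ) < M := by exact_mod_cast hM3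
    rw [Real.dist_eq, sub_zero, abs_div, abs_of_pos hMpos, div_lt_iff₀ hMpos]
    have habs : |D M ω| < (M:ℝ) * (1/((k:ℝ)+1)) := by
      rw [abs_lt]
      constructor <;> linarith
    have : (M:ℝ) * (1/((k:ℝ)+1)) ≤ ε * M := by
      rw [mul_comm (ε) ((M:ℝ))]
      apply mul_le_mul_of_nonneg_left hk.le hMpos.le
    linarith
  -- Final assembly
  filter_upwards [hDlim] with ω hω
  have hA : Tendsto (fun M : ℕ => (∑ m ∈ Finset.range M, Y m ω) / M)
      atTop (nhds sδ) := by
    have hadd := hω.add stepB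
    rw [zero_add] at hadd
    apply hadd.congr
    intro M
    rw [hD]
    simp only
    rw [Finset.sum_sub_distrib, ← add_div, sub_add_cancel]
  have hcomp : Tendsto (fun n : ℕ =>
      (∑ m ∈ Finset.range (GG arm n), Y m ω) / (GG arm n : ℝ)) atTop (nhds sδ) :=
    hA.comp (GG_tendsto arm)
  have hprod := hcomp.mul (GG_div_tendsto arm)
  rw [mul_one] at hprod
  apply hprod.congr'
  filter_upwards [eventually_ge_atTop 1] with n hn
  rw [sum_reindex arm (fun i s => U i s ω) n]
  rcases Nat.eq_zero_or_pos (GG arm n) with h0 | hpos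
  · rw [h0]
    simp
  · have hGpos : (0:ℝ) < GG arm n := by exact_mod_cast hpos
    have hnpos : (0:ℝ) < n := by exact_mod_cast hn
    field_simp
    rfl

end BanditAux

/-- In the infinitely-armed bandit with arms of success probabilities δ_i, the optimal
asymptotic average value equals δ = sup_i δ_i:
(a) every policy has limsup average reward ≤ δ almost surely, and
(b) some policy (knowing all δ_i) has average reward converging to δ almost surely. -/
theorem bandit_optimal_value
    {Ω : Type*} [MeasurableSpace Ω] (P : Measure Ω) [IsProbabilityMeasure P]
    (δ : ℕ → ℝ) (hδ : ∀ i, δ i ∈ Set.Icc (0 : ℝ) 1)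
    (U : ℕ → ℕ → Ω → Bool)
    (hmeas : ∀ i t, Measurable (U i t))
    (hindep : iIndepFun
      (fun (q : ℕ × ℕ) ω => U q.1 q.2 ω) P)
    (hber : ∀ i t, P {ω | U i t ω = true} = ENNReal.ofReal (δ i)) :
    (∀ p : List (Act × Bool) → Act, ∀ᵐ ω ∂P,
      limsup (fun n : ℕ =>
        (∑ t ∈ Finset.range n,
          (if rewB p (fun i s => U i s ω) t then (1 : ℝ) else 0)) / n) atTop ≤ ⨆ i, δ i) ∧
    (∃ p : List (Act × Bool) → Act, ∀ᵐ ω ∂P,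
      Tendsto (fun n : ℕ =>
        (∑ t ∈ Finset.range n,
          (if rewB p (fun i s => U i s ω) t then (1 : ℝ) else 0)) / n)
        atTop (nhds (⨆ i, δ i))) := by
  constructor
  · intro p
    exact BanditAux.parta hδ hmeas hindep hber p
  · exact BanditAux.partb hδ hmeas hindep hber
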